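/- arXiv:2507.21982 — 5 statements merged into one kernel-verified Lean document; each statement's English description precedes it below -/
import Mathlib

section
/- In the PAVG sampler, the mean-parameterized scheme with auxiliary variable z_t = Lᵀs_t + Z (Z ∼ N(0,I)) and the variance-parameterized scheme with auxiliary variable z_t = s_t + (Lᵀ)⁻¹Z produce identical transition kernels from s_t to s_{t+1}: for any s_t and any realization Z, the proposal distributions Q(s*|z_t;s_t), the backward proposal Q(s_t|z_t;s*), and the Metropolis–Hastings acceptance ratios coincide as functions of (s_t, s*, Z). -/
/-!
The mean-scheme auxiliary variable is `Lᵀ` times the variance-scheme one: `zm = Lᵀ zv`.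
Hence `L zm = L Lᵀ zv = (W + D) zv`, so the two proposal energies are literally the same
function, and `‖zm - Lᵀ s‖² = (zv - s)ᵀ L Lᵀ (zv - s) = (zv - s)ᵀ (W + D) (zv - s)`, so the
Gaussian factors of the acceptance ratios agree as well.
-/

open Matrix

namespace Matrix

variable {n R : Type*} [Fintype n] [DecidableEq n]

theorem transpose_mulVec_add_inv_transpose_mulVec [CommRing R] {L : Matrix n n R}
    (hL : IsUnit L) (s z : n → R) :
    Lᵀ *ᵥ (s + (Lᵀ)⁻¹ *ᵥ z) = Lᵀ *ᵥ s + z := by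
  have hdet : IsUnit Lᵀ.det := by
    rw [det_transpose]
    exact (isUnit_iff_isUnit_det L).mp hL
  rw [mulVec_add, mulVec_mulVec, mul_nonsing_inv _ hdet, one_mulVec]

omit [DecidableEq n] in
theorem transpose_mulVec_dotProduct_self [CommSemiring R] (L : Matrix n n R) (v : n → R) :
    (Lᵀ *ᵥ v) ⬝ᵥ (Lᵀ *ᵥ v) = v ⬝ᵥ ((L * Lᵀ) *ᵥ v) := by
  rw [← mulVec_mulVec, dotProduct_mulVec v L, ← mulVec_transpose]

end Matrix

theorem stmt3_general {d : ℕ} (S : Finset (Fin d → ℝ))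
    (W D L : Matrix (Fin d) (Fin d) ℝ)
    (hL : L * Lᵀ = W + D)
    (hLunit : IsUnit L)
    (f : (Fin d → ℝ) → ℝ) (gradf : (Fin d → ℝ) → Fin d → ℝ)
    (st sstar Z : Fin d → ℝ)
    (zm zv : Fin d → ℝ) (hzm : zm = Lᵀ *ᵥ st + Z) (hzv : zv = st + (Lᵀ)⁻¹ *ᵥ Z)
    (Em Ev : (Fin d → ℝ) → (Fin d → ℝ) → ℝ)
    (hEm : ∀ cur s, Em cur s =
      -(1 / 2) * (s ⬝ᵥ (D *ᵥ s)) + (gradf cur - W *ᵥ cur + L *ᵥ zm) ⬝ᵥ s)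
    (hEv : ∀ cur s, Ev cur s =
      -(1 / 2) * (s ⬝ᵥ (D *ᵥ s)) + (gradf cur - W *ᵥ cur + (W + D) *ᵥ zv) ⬝ᵥ s) :
    (∀ s, Em st s = Ev st s) ∧ (∀ s, Em sstar s = Ev sstar s) ∧
    (Real.exp (f sstar - f st) *
        (Real.exp (-(1 / 2) * ((zm - Lᵀ *ᵥ sstar) ⬝ᵥ (zm - Lᵀ *ᵥ sstar))) *
          (Real.exp (Em sstar st) / ∑ s ∈ S, Real.exp (Em sstar s))) /
        (Real.exp (-(1 / 2) * ((zm - Lᵀ *ᵥ st) ⬝ᵥ (zm - Lᵀ *ᵥ st))) *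
          (Real.exp (Em st sstar) / ∑ s ∈ S, Real.exp (Em st s)))
      = Real.exp (f sstar - f st) *
        (Real.exp (-(1 / 2) * ((zv - sstar) ⬝ᵥ ((W + D) *ᵥ (zv - sstar)))) *
          (Real.exp (Ev sstar st) / ∑ s ∈ S, Real.exp (Ev sstar s))) /
        (Real.exp (-(1 / 2) * ((zv - st) ⬝ᵥ ((W + D) *ᵥ (zv - st)))) *
          (Real.exp (Ev st sstar) / ∑ s ∈ S, Real.exp (Ev st s)))) := by
  have hzm_zv : zm = Lᵀ *ᵥ zv := by
    rw [hzv, hzm, transpose_mulVec_add_inv_transpose_mulVec hLunit]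
  have hE : ∀ cur s, Em cur s = Ev cur s := by
    intro cur s
    rw [hEm, hEv, hzm_zv, mulVec_mulVec, hL]
  have hquad : ∀ s, (zm - Lᵀ *ᵥ s) ⬝ᵥ (zm - Lᵀ *ᵥ s)
      = (zv - s) ⬝ᵥ ((W + D) *ᵥ (zv - s)) := by
    intro s
    rw [hzm_zv, ← mulVec_sub, transpose_mulVec_dotProduct_self, hL]
  refine ⟨hE st, hE sstar, ?_⟩
  simp only [hE, hquad]

/-- Equivalence of the mean-parameterized and variance-parameterized PAVG schemes:
with zm = Lᵀs_t + Z and zv = s_t + (Lᵀ)⁻¹Z, the forward proposal energies, the backward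
proposal energies, and the Metropolis–Hastings acceptance ratios coincide. -/
theorem stmt3 {d : ℕ} (S : Finset (Fin d → ℝ))
    (W D L : Matrix (Fin d) (Fin d) ℝ)
    (hW : W.IsSymm) (hD : D.IsDiag) (hL : L * Lᵀ = W + D) (hpos : (W + D).PosDef)
    (hLunit : IsUnit L)
    (f : (Fin d → ℝ) → ℝ) (gradf : (Fin d → ℝ) → Fin d → ℝ)
    (st sstar Z : Fin d → ℝ) (hst : st ∈ S) (hsstar : sstar ∈ S)
    (zm zv : Fin d → ℝ) (hzm : zm = Lᵀ *ᵥ st + Z) (hzv : zv = st + (Lᵀ)⁻¹ *ᵥ Z)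
    (Em Ev : (Fin d → ℝ) → (Fin d → ℝ) → ℝ)
    (hEm : ∀ cur s, Em cur s =
      -(1 / 2) * (s ⬝ᵥ (D *ᵥ s)) + (gradf cur - W *ᵥ cur + L *ᵥ zm) ⬝ᵥ s)
    (hEv : ∀ cur s, Ev cur s =
      -(1 / 2) * (s ⬝ᵥ (D *ᵥ s)) + (gradf cur - W *ᵥ cur + (W + D) *ᵥ zv) ⬝ᵥ s) :
    (∀ s, Em st s = Ev st s) ∧ (∀ s, Em sstar s = Ev sstar s) ∧
    (Real.exp (f sstar - f st) *
        (Real.exp (-(1 / 2) * ((zm - Lᵀ *ᵥ sstar) ⬝ᵥ (zm - Lᵀ *ᵥ sstar))) *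
          (Real.exp (Em sstar st) / ∑ s ∈ S, Real.exp (Em sstar s))) /
        (Real.exp (-(1 / 2) * ((zm - Lᵀ *ᵥ st) ⬝ᵥ (zm - Lᵀ *ᵥ st))) *
          (Real.exp (Em st sstar) / ∑ s ∈ S, Real.exp (Em st s)))
      = Real.exp (f sstar - f st) *
        (Real.exp (-(1 / 2) * ((zv - sstar) ⬝ᵥ ((W + D) *ᵥ (zv - sstar)))) *
          (Real.exp (Ev sstar st) / ∑ s ∈ S, Real.exp (Ev sstar s))) /
        (Real.exp (-(1 / 2) * ((zv - st) ⬝ᵥ ((W + D) *ᵥ (zv - st)))) *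
          (Real.exp (Ev st sstar) / ∑ s ∈ S, Real.exp (Ev st s)))) :=
  stmt3_general S W D L hL hLunit f gradf st sstar Z zm zv hzm hzv Em Ev hEm hEv
end

section
/- If the target potential is exactly quadratic, f(s) = ½ sᵀWs + bᵀs with the same matrix W used in the preconditioning, then the PAVG Metropolis–Hastings acceptance ratio equals 1 for every current state s_t, auxiliary draw z_t, and proposal s*; i.e., PAVG is rejection-free. -/
/-!
Write `M = W + D`. For a quadratic potential the joint log-density of `(s, z)`,
`f s - ½ (z - s)ᵀ M (z - s)`, equals `-½ sᵀ D s + (b + M z)ᵀ s - ½ zᵀ M z`: the `sᵀ W s` terms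
cancel and, `M` being symmetric, the cross terms combine into `(M z)ᵀ s`. So, as a function of
`s`, the target times the Gaussian likelihood of `z` is proportional to the proposal
`Q(s | z)`, and every factor of the Metropolis–Hastings ratio cancels.
-/

open Matrix

theorem Matrix.IsSymm.dotProduct_mulVec_comm {ι α : Type*} [Fintype ι] [CommSemiring α]
    {M : Matrix ι ι α} (hM : M.IsSymm) (x y : ι → α) :
    x ⬝ᵥ (M *ᵥ y) = y ⬝ᵥ (M *ᵥ x) := by
  conv_lhs => rw [← hM.eq]
  exact dotProduct_transpose_mulVec M x y

theorem quadratic_add_gaussian_exponent {ι : Type*} [Fintype ι] (W D : Matrix ι ι ℝ)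
    (hWD : (W + D).IsSymm) (b z s : ι → ℝ) :
    (1 / 2) * (s ⬝ᵥ (W *ᵥ s)) + b ⬝ᵥ s + -(1 / 2) * ((z - s) ⬝ᵥ ((W + D) *ᵥ (z - s))) =
      -(1 / 2) * (s ⬝ᵥ (D *ᵥ s)) + (b + (W + D) *ᵥ z) ⬝ᵥ s +
        -(1 / 2) * (z ⬝ᵥ ((W + D) *ᵥ z)) := by
  have hcross : z ⬝ᵥ ((W + D) *ᵥ s) = ((W + D) *ᵥ z) ⬝ᵥ s := by
    rw [hWD.dotProduct_mulVec_comm, dotProduct_comm]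
  have hsquare : (z - s) ⬝ᵥ ((W + D) *ᵥ (z - s)) =
      z ⬝ᵥ ((W + D) *ᵥ z) - 2 * (((W + D) *ᵥ z) ⬝ᵥ s) + s ⬝ᵥ (W *ᵥ s) + s ⬝ᵥ (D *ᵥ s) := by
    rw [mulVec_sub, dotProduct_sub, sub_dotProduct, sub_dotProduct, hcross, dotProduct_comm s,
      add_mulVec W D s, dotProduct_add]
    ring
  rw [hsquare, add_dotProduct]
  ring

theorem exp_sub_mul_div_eq_one_of_add_eq {α : Type*} (F h g : α → ℝ) (c T : ℝ) (hT : T ≠ 0)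
    (hFhg : ∀ s, F s + h s = g s + c) (x y : α) :
    Real.exp (F y - F x) * (Real.exp (h y) * (Real.exp (g x) / T)) /
        (Real.exp (h x) * (Real.exp (g y) / T)) = 1 := by
  rw [div_eq_one_iff_eq (mul_ne_zero (Real.exp_ne_zero _) (div_ne_zero (Real.exp_ne_zero _) hT)),
    mul_div_assoc', mul_div_assoc', mul_div_assoc', ← Real.exp_add, ← Real.exp_add,
    ← Real.exp_add]
  congr 2
  linarith [hFhg x, hFhg y]

theorem stmt4_general {d : ℕ} (S : Finset (Fin d → ℝ))
    (W D : Matrix (Fin d) (Fin d) ℝ) (b zt : Fin d → ℝ)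
    (hpos : (W + D).PosDef)
    (st sstar : Fin d → ℝ) (hst : st ∈ S)
    (f : (Fin d → ℝ) → ℝ) (hf : ∀ s, f s = (1 / 2) * (s ⬝ᵥ (W *ᵥ s)) + b ⬝ᵥ s)
    (Q : (Fin d → ℝ) → ℝ)
    (hQ : ∀ s, Q s =
      Real.exp (-(1 / 2) * (s ⬝ᵥ (D *ᵥ s)) + (b + (W + D) *ᵥ zt) ⬝ᵥ s) /
        ∑ s' ∈ S, Real.exp (-(1 / 2) * (s' ⬝ᵥ (D *ᵥ s')) + (b + (W + D) *ᵥ zt) ⬝ᵥ s')) :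
    Real.exp (f sstar - f st) *
        (Real.exp (-(1 / 2) * ((zt - sstar) ⬝ᵥ ((W + D) *ᵥ (zt - sstar)))) * Q st) /
        (Real.exp (-(1 / 2) * ((zt - st) ⬝ᵥ ((W + D) *ᵥ (zt - st)))) * Q sstar) = 1 := by
  have hsymm : (W + D).IsSymm := isHermitian_iff_isSymm.mp hpos.isHermitian
  have hZ : ∑ s' ∈ S,
      Real.exp (-(1 / 2) * (s' ⬝ᵥ (D *ᵥ s')) + (b + (W + D) *ᵥ zt) ⬝ᵥ s') ≠ 0 :=
    (Finset.sum_pos (fun _ _ => Real.exp_pos _) ⟨st, hst⟩).ne'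
  rw [hQ, hQ]
  exact exp_sub_mul_div_eq_one_of_add_eq f _ _ _ _ hZ
    (fun s => by rw [hf, quadratic_add_gaussian_exponent W D hsymm b zt s]) st sstar

/-- PAVG is rejection-free for a quadratic potential f(s) = ½ sᵀWs + bᵀs with the same W
used in preconditioning: the Metropolis–Hastings acceptance ratio equals 1 for every
current state s_t, auxiliary draw z_t and proposal s*. -/
theorem stmt4 {d : ℕ} (S : Finset (Fin d → ℝ))
    (W D : Matrix (Fin d) (Fin d) ℝ) (b zt : Fin d → ℝ)
    (hW : W.IsSymm) (hD : D.IsDiag) (hpos : (W + D).PosDef)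
    (st sstar : Fin d → ℝ) (hst : st ∈ S) (hsstar : sstar ∈ S)
    (f : (Fin d → ℝ) → ℝ) (hf : ∀ s, f s = (1 / 2) * (s ⬝ᵥ (W *ᵥ s)) + b ⬝ᵥ s)
    (Q : (Fin d → ℝ) → ℝ)
    (hQ : ∀ s, Q s =
      Real.exp (-(1 / 2) * (s ⬝ᵥ (D *ᵥ s)) + (b + (W + D) *ᵥ zt) ⬝ᵥ s) /
        ∑ s' ∈ S, Real.exp (-(1 / 2) * (s' ⬝ᵥ (D *ᵥ s')) + (b + (W + D) *ᵥ zt) ⬝ᵥ s')) :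
    Real.exp (f sstar - f st) *
        (Real.exp (-(1 / 2) * ((zt - sstar) ⬝ᵥ ((W + D) *ᵥ (zt - sstar)))) * Q st) /
        (Real.exp (-(1 / 2) * ((zt - st) ⬝ᵥ ((W + D) *ᵥ (zt - st)))) * Q sstar) = 1 :=
  stmt4_general S W D b zt hpos st sstar hst f hf Q hQ
end

section
/- In the continuous-state marginalized PAVG sampler, if z_t = s_t + (Lᵀ)⁻¹Z with Z ∼ N(0,I) and s* given z_t is Gaussian with density ∝ exp(−½sᵀDs + (∇f(s_t) − Ws_t + (W+D)z_t)ᵀs), then marginally s* = s_t + D⁻¹∇f(s_t) + ξ where ξ ∼ N(0, 2D⁻¹ + D⁻¹WD⁻¹). -/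
open Matrix MeasureTheory

open Real



lemma sqrt_pow' (a : ℝ) (ha : 0 ≤ a) (n : ℕ) : Real.sqrt (a ^ n) = Real.sqrt a ^ n := by
  induction n with
  | zero => simp
  | succ n ih => rw [pow_succ, pow_succ, Real.sqrt_mul (pow_nonneg ha n), ih]

lemma gauss_base (d : ℕ) :
    ∫ x : Fin d → ℝ, Real.exp (-(1/2) * (x ⬝ᵥ x)) = Real.sqrt ((2*Real.pi)^d) := by
  have h1 : ∀ x : Fin d → ℝ, Real.exp (-(1/2) * (x ⬝ᵥ x)) = ∏ i, Real.exp (-(1/2) * (x i)^2) := by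
    intro x
    rw [← Real.exp_sum]
    congr 1
    simp [dotProduct, Finset.mul_sum, pow_two]
  simp_rw [h1]
  rw [MeasureTheory.volume_pi, MeasureTheory.integral_fintype_prod_eq_pow (ι := Fin d) (fun t : ℝ => Real.exp (-(1/2) * t^2))]
  have h2 : (∫ t : ℝ, Real.exp (-(1/2) * t^2)) = Real.sqrt (2*Real.pi) := by
    rw [integral_gaussian (1/2)]
    norm_num [mul_comm]
  rw [h2, sqrt_pow' _ (by positivity), Fintype.card_fin]

lemma integral_comp_mulVec {d : ℕ} (B : Matrix (Fin d) (Fin d) ℝ) (hB : B.det ≠ 0)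
    (g : (Fin d → ℝ) → ℝ) (hg : Continuous g) :
    ∫ x, g (B *ᵥ x) = |B.det|⁻¹ * ∫ y, g y := by
  have hf : LinearMap.det (Matrix.toLin' B) ≠ 0 := by rw [LinearMap.det_toLin']; exact hB
  have hmap := Measure.map_linearMap_addHaar_eq_smul_addHaar (volume : Measure (Fin d → ℝ)) hf
  have hcont : Continuous (Matrix.toLin' B) := LinearMap.continuous_of_finiteDimensional _
  calc ∫ x, g (B *ᵥ x) = ∫ x, g (Matrix.toLin' B x) := by simp [Matrix.toLin'_apply]
    _ = ∫ y, g y ∂(Measure.map (Matrix.toLin' B) volume) :=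
        (integral_map hcont.aemeasurable hg.aestronglyMeasurable).symm
    _ = |B.det|⁻¹ * ∫ y, g y := by
        rw [hmap, integral_smul_measure, LinearMap.det_toLin',
          ENNReal.toReal_ofReal (abs_nonneg _), abs_inv, smul_eq_mul]


lemma dot_shift {d : ℕ} (M : Matrix (Fin d) (Fin d) ℝ) (x y : Fin d → ℝ) :
    (M *ᵥ x) ⬝ᵥ y = x ⬝ᵥ (Mᵀ *ᵥ y) := by
  rw [dotProduct_mulVec, vecMul_transpose, dotProduct_comm]



lemma gauss_quad {d : ℕ} (A : Matrix (Fin d) (Fin d) ℝ) (hA : A.PosDef) :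
    ∫ x : Fin d → ℝ, Real.exp (-(1/2) * (x ⬝ᵥ A *ᵥ x)) = Real.sqrt ((2*Real.pi)^d / A.det) := by
  set B := (open scoped MatrixOrder in CFC.sqrt A) with hBdef
  have hBps : B.PosSemidef := (open scoped MatrixOrder in (CFC.sqrt_nonneg A).posSemidef)
  have hBB : B * B = A := (open scoped MatrixOrder in CFC.sqrt_mul_sqrt_self A hA.posSemidef.nonneg)
  have hBsymm : Bᵀ = B := by
    have := hBps.1
    simpa [Matrix.IsHermitian, Matrix.conjTranspose_eq_transpose_of_trivial] using this
  have hdetsq : B.det * B.det = A.det := by rw [← Matrix.det_mul, hBB]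
  have hdetnn : 0 ≤ B.det := by
    rw [hBps.1.det_eq_prod_eigenvalues]
    push_cast
    exact Finset.prod_nonneg fun i _ => hBps.eigenvalues_nonneg i
  have hdetpos : 0 < B.det := by
    rcases hdetnn.lt_or_eq with h | h
    · exact h
    · exfalso; have := hA.det_pos; rw [← hdetsq, ← h] at this; simp at this
  have hdot : Continuous (fun y : Fin d → ℝ => y ⬝ᵥ y) := by
    simp only [dotProduct]
    exact continuous_finset_sum _ fun i _ => (continuous_apply i).mul (continuous_apply i)
  have hcont : Continuous (fun y : Fin d → ℝ => Real.exp (-(1/2) * (y ⬝ᵥ y))) :=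
    Real.continuous_exp.comp (continuous_const.mul hdot)
  have key := integral_comp_mulVec B hdetpos.ne' _ hcont
  have h1 : ∀ x : Fin d → ℝ, (B *ᵥ x) ⬝ᵥ (B *ᵥ x) = x ⬝ᵥ A *ᵥ x := by
    intro x
    rw [dot_shift, hBsymm, mulVec_mulVec, hBB]
  simp_rw [h1] at key
  have hs : Real.sqrt A.det = B.det := by rw [← hdetsq, Real.sqrt_mul_self hdetnn]
  rw [key, gauss_base, abs_of_pos hdetpos, Real.sqrt_div (by positivity), hs,
    inv_mul_eq_div]




lemma gauss_lin {d : ℕ} (A : Matrix (Fin d) (Fin d) ℝ) (hA : A.PosDef) (hAs : Aᵀ = A)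
    (b : Fin d → ℝ) :
    ∫ x : Fin d → ℝ, Real.exp (-(1/2) * (x ⬝ᵥ A *ᵥ x) + b ⬝ᵥ x)
      = Real.sqrt ((2*Real.pi)^d / A.det) * Real.exp ((1/2) * (b ⬝ᵥ A⁻¹ *ᵥ b)) := by
  have hdet : IsUnit A.det := isUnit_iff_ne_zero.mpr hA.det_pos.ne'
  set c := A⁻¹ *ᵥ b with hc
  have hAc : A *ᵥ c = b := by
    rw [hc, mulVec_mulVec, Matrix.mul_nonsing_inv _ hdet, one_mulVec]
  have key : ∀ x : Fin d → ℝ,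
      Real.exp (-(1/2) * ((x + c) ⬝ᵥ A *ᵥ (x + c)) + b ⬝ᵥ (x + c))
        = Real.exp (-(1/2) * (x ⬝ᵥ A *ᵥ x)) * Real.exp ((1/2) * (b ⬝ᵥ A⁻¹ *ᵥ b)) := by
    intro x
    rw [← Real.exp_add]
    congr 1
    have h1 : (x + c) ⬝ᵥ A *ᵥ (x + c)
        = x ⬝ᵥ A *ᵥ x + 2 * (b ⬝ᵥ x) + b ⬝ᵥ c := by
      rw [Matrix.mulVec_add, dotProduct_add, add_dotProduct, add_dotProduct, hAc]
      have h2 : x ⬝ᵥ b = b ⬝ᵥ x := dotProduct_comm _ _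
      have h3 : c ⬝ᵥ A *ᵥ x = b ⬝ᵥ x := by
        rw [hc, dot_shift, Matrix.transpose_nonsing_inv, hAs, mulVec_mulVec,
          Matrix.nonsing_inv_mul _ hdet, one_mulVec]
      rw [h2, h3]
      have h4 : c ⬝ᵥ b = b ⬝ᵥ c := dotProduct_comm _ _
      rw [h4]; ring
    rw [h1, dotProduct_add]
    ring
  calc ∫ x : Fin d → ℝ, Real.exp (-(1/2) * (x ⬝ᵥ A *ᵥ x) + b ⬝ᵥ x)
      = ∫ x : Fin d → ℝ, Real.exp (-(1/2) * ((x + c) ⬝ᵥ A *ᵥ (x + c)) + b ⬝ᵥ (x + c)) :=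
        (integral_add_right_eq_self (fun x => Real.exp (-(1/2) * (x ⬝ᵥ A *ᵥ x) + b ⬝ᵥ x)) c).symm
    _ = ∫ x : Fin d → ℝ, Real.exp (-(1/2) * (x ⬝ᵥ A *ᵥ x)) * Real.exp ((1/2) * (b ⬝ᵥ A⁻¹ *ᵥ b)) := by
        simp_rw [key]
    _ = _ := by rw [integral_mul_const, gauss_quad A hA]




lemma symdot {d : ℕ} {N : Matrix (Fin d) (Fin d) ℝ} (hN : Nᵀ = N) (x y : Fin d → ℝ) :
    x ⬝ᵥ N *ᵥ y = y ⬝ᵥ N *ᵥ x := by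
  rw [dotProduct_comm, dot_shift, hN]

/-- Multivariate Gaussian density with covariance `V` and mean `μ` at `x`. -/
noncomputable def gpdf {d : ℕ} (V : Matrix (Fin d) (Fin d) ℝ) (μ x : Fin d → ℝ) : ℝ :=
  (Real.sqrt ((2 * Real.pi) ^ d * V.det))⁻¹ *
    Real.exp (-(1 / 2) * ((x - μ) ⬝ᵥ (V⁻¹ *ᵥ (x - μ))))

/-- Marginalized continuous-state PAVG: integrating the auxiliary Gaussian variable out,
the proposal is s* = s_t + D⁻¹∇f(s_t) + ξ with ξ ∼ N(0, 2D⁻¹ + D⁻¹WD⁻¹). -/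
theorem stmt6 {d : ℕ}
    (W D L : Matrix (Fin d) (Fin d) ℝ)
    (hW : W.IsSymm) (hD : D.IsDiag) (hDpos : D.PosDef)
    (hpos : (W + D).PosDef) (hL : L * Lᵀ = W + D)
    (gradf : (Fin d → ℝ) → Fin d → ℝ) (st : Fin d → ℝ) :
    ∀ s : Fin d → ℝ,
      (∫ zz : Fin d → ℝ,
          gpdf D⁻¹ (D⁻¹ *ᵥ (gradf st - W *ᵥ st + (W + D) *ᵥ zz)) s *
            gpdf (W + D)⁻¹ st zz)
        = gpdf ((2 : ℝ) • D⁻¹ + D⁻¹ * W * D⁻¹) (st + D⁻¹ *ᵥ gradf st) s := by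
  intro s
  set g : Fin d → ℝ := gradf st with hg
  set A : Matrix (Fin d) (Fin d) ℝ := W + D with hAdef
  set K : Matrix (Fin d) (Fin d) ℝ := W + D + D with hKdef
  have hKpos : K.PosDef := hpos.add hDpos
  have hDs : Dᵀ = D := hD.isSymm
  have hAs : Aᵀ = A := by rw [hAdef, transpose_add, hW.eq, hDs]
  have hKs : Kᵀ = K := by rw [hKdef, transpose_add, transpose_add, hW.eq, hDs]
  have uD : IsUnit D.det := isUnit_iff_ne_zero.mpr hDpos.det_pos.ne'
  have uA : IsUnit A.det := isUnit_iff_ne_zero.mpr hpos.det_pos.ne'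
  have uK : IsUnit K.det := isUnit_iff_ne_zero.mpr hKpos.det_pos.ne'
  have hDinv : D * D⁻¹ = 1 := Matrix.mul_nonsing_inv _ uD
  have hDinv' : D⁻¹ * D = 1 := Matrix.nonsing_inv_mul _ uD
  have hAinv : A * A⁻¹ = 1 := Matrix.mul_nonsing_inv _ uA
  have hAinv' : A⁻¹ * A = 1 := Matrix.nonsing_inv_mul _ uA
  have hKinv : K * K⁻¹ = 1 := Matrix.mul_nonsing_inv _ uK
  have hKinv' : K⁻¹ * K = 1 := Matrix.nonsing_inv_mul _ uK
  have hDis : (D⁻¹)ᵀ = D⁻¹ := by rw [Matrix.transpose_nonsing_inv, hDs]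
  have hDii : (D⁻¹)⁻¹ = D := Matrix.nonsing_inv_nonsing_inv _ uD
  have hAii : (A⁻¹)⁻¹ = A := Matrix.nonsing_inv_nonsing_inv _ uA
  -- key matrices and vectors
  set M : Matrix (Fin d) (Fin d) ℝ := A * D⁻¹ * A + A with hMdef
  set u : Fin d → ℝ := s - D⁻¹ *ᵥ (g - W *ᵥ st) with hu
  set b : Fin d → ℝ := A *ᵥ u + A *ᵥ st with hb
  set c : ℝ := -(1/2) * (u ⬝ᵥ D *ᵥ u + st ⬝ᵥ A *ᵥ st) with hc
  set v : Fin d → ℝ := s - (st + D⁻¹ *ᵥ g) with hv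
  set Sg : Matrix (Fin d) (Fin d) ℝ := (2 : ℝ) • D⁻¹ + D⁻¹ * W * D⁻¹ with hSdef
  clear_value g A K M u b c v Sg
  -- matrix identities
  have mDP : D * (D⁻¹ * A) = A := by rw [← mul_assoc, hDinv, one_mul]
  have mPt : (D⁻¹ * A)ᵀ = A * D⁻¹ := by rw [transpose_mul, hAs, hDis]
  have mPtD : A * D⁻¹ * D = A := by rw [mul_assoc, hDinv', mul_one]
  have hK' : K = A + D := by rw [hKdef, hAdef]
  have hMfact : M = A * D⁻¹ * K := by
    rw [hMdef, hK', mul_add, mPtD]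
  have hMs : Mᵀ = M := by
    rw [hMdef, transpose_add, transpose_mul, transpose_mul, hAs, hDis, mul_assoc]
  have hMpos : M.PosDef := by
    have h1 : (A * D⁻¹ * A).PosSemidef := by
      have h2 := Matrix.PosSemidef.conjTranspose_mul_mul_same (hDpos.inv).posSemidef A
      have h3 : Aᴴ = A := by
        rw [show Aᴴ = Aᵀ from rfl, hAs]
      rw [h3, mul_assoc] at h2
      rw [mul_assoc]
      exact h2
    rw [hMdef]
    exact Matrix.PosDef.posSemidef_add h1 hpos
  have hMinv : M⁻¹ = K⁻¹ * D * A⁻¹ := by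
    apply Matrix.inv_eq_right_inv
    rw [hMfact]
    calc A * D⁻¹ * K * (K⁻¹ * D * A⁻¹)
        = A * (D⁻¹ * (K * (K⁻¹ * (D * A⁻¹)))) := by simp only [mul_assoc]
      _ = A * (D⁻¹ * (D * A⁻¹)) := by rw [← mul_assoc K, hKinv, one_mul]
      _ = A * A⁻¹ := by rw [← mul_assoc D⁻¹, hDinv', one_mul]
      _ = 1 := hAinv
  have hSfact : Sg = D⁻¹ * K * D⁻¹ := by
    have h2 : D⁻¹ * K * D⁻¹ = D⁻¹ * W * D⁻¹ + D⁻¹ + D⁻¹ := by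
      rw [hKdef, mul_add, mul_add, hDinv', add_mul, add_mul, one_mul, mul_assoc]
    rw [hSdef, h2, two_smul]
    abel
  have hSinv : Sg⁻¹ = D * K⁻¹ * D := by
    apply Matrix.inv_eq_right_inv
    rw [hSfact]
    calc D⁻¹ * K * D⁻¹ * (D * K⁻¹ * D)
        = D⁻¹ * (K * ((D⁻¹ * D) * (K⁻¹ * D))) := by simp only [mul_assoc]
      _ = D⁻¹ * (K * (K⁻¹ * D)) := by rw [hDinv', one_mul]
      _ = D⁻¹ * D := by rw [← mul_assoc K, hKinv, one_mul]
      _ = 1 := hDinv'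
  -- pointwise rewriting of integrand
  have integrand : ∀ zz : Fin d → ℝ,
      gpdf D⁻¹ (D⁻¹ *ᵥ (g - W *ᵥ st + A *ᵥ zz)) s * gpdf A⁻¹ st zz
        = ((Real.sqrt ((2 * Real.pi) ^ d * (D⁻¹).det))⁻¹ *
            (Real.sqrt ((2 * Real.pi) ^ d * (A⁻¹).det))⁻¹ * Real.exp c) *
          Real.exp (-(1/2) * (zz ⬝ᵥ M *ᵥ zz) + b ⬝ᵥ zz) := by
    intro zz
    have hvec : s - D⁻¹ *ᵥ (g - W *ᵥ st + A *ᵥ zz) = u - (D⁻¹ * A) *ᵥ zz := by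
      rw [Matrix.mulVec_add, sub_add_eq_sub_sub, mulVec_mulVec, hu]
    have q1 : (u - (D⁻¹ * A) *ᵥ zz) ⬝ᵥ D *ᵥ (u - (D⁻¹ * A) *ᵥ zz)
        = u ⬝ᵥ D *ᵥ u - 2*(zz ⬝ᵥ A *ᵥ u) + zz ⬝ᵥ (A * D⁻¹ * A) *ᵥ zz := by
      rw [Matrix.mulVec_sub, dotProduct_sub, sub_dotProduct, sub_dotProduct]
      have t1 : u ⬝ᵥ D *ᵥ ((D⁻¹ * A) *ᵥ zz) = zz ⬝ᵥ A *ᵥ u := by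
        rw [mulVec_mulVec, mDP]
        exact symdot hAs u zz
      have t2 : ((D⁻¹ * A) *ᵥ zz) ⬝ᵥ D *ᵥ u = zz ⬝ᵥ A *ᵥ u := by
        rw [dot_shift, mPt, mulVec_mulVec, mPtD]
      have t3 : ((D⁻¹ * A) *ᵥ zz) ⬝ᵥ D *ᵥ ((D⁻¹ * A) *ᵥ zz) = zz ⬝ᵥ (A * D⁻¹ * A) *ᵥ zz := by
        rw [mulVec_mulVec, mDP, dot_shift, mPt, mulVec_mulVec]
      rw [t1, t2, t3]; ring
    have q2 : (zz - st) ⬝ᵥ A *ᵥ (zz - st)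
        = zz ⬝ᵥ A *ᵥ zz - 2*(zz ⬝ᵥ A *ᵥ st) + st ⬝ᵥ A *ᵥ st := by
      rw [Matrix.mulVec_sub, dotProduct_sub, sub_dotProduct, sub_dotProduct,
        symdot hAs st zz]
      ring
    have he : -(1/2) * ((u - (D⁻¹ * A) *ᵥ zz) ⬝ᵥ D *ᵥ (u - (D⁻¹ * A) *ᵥ zz))
        + (-(1/2) * ((zz - st) ⬝ᵥ A *ᵥ (zz - st)))
        = (-(1/2) * (zz ⬝ᵥ M *ᵥ zz) + b ⬝ᵥ zz) + c := by
      rw [q1, q2, hc, hb]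
      have hm : zz ⬝ᵥ M *ᵥ zz = zz ⬝ᵥ (A * D⁻¹ * A) *ᵥ zz + zz ⬝ᵥ A *ᵥ zz := by
        rw [hMdef, Matrix.add_mulVec, dotProduct_add]
      have hbz : (A *ᵥ u + A *ᵥ st) ⬝ᵥ zz = zz ⬝ᵥ A *ᵥ u + zz ⬝ᵥ A *ᵥ st := by
        rw [add_dotProduct, dotProduct_comm (A *ᵥ u), dotProduct_comm (A *ᵥ st)]
      rw [hm, hbz]; ring
    rw [gpdf, gpdf, hDii, hAii, hvec]
    rw [show ∀ x y : ℝ, ∀ c1 c2 : ℝ, (c1 * Real.exp x) * (c2 * Real.exp y)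
      = (c1 * c2) * Real.exp (x + y) from fun x y c1 c2 => by rw [Real.exp_add]; ring]
    norm_num only at he ⊢
    rw [he, Real.exp_add]
    ring
  simp_rw [integrand]
  rw [MeasureTheory.integral_const_mul, gauss_lin M hMpos hMs b]
  -- now pure scalar/matrix computation
  rw [gpdf]
  have uM : IsUnit M.det := isUnit_iff_ne_zero.mpr hMpos.det_pos.ne'
  have pu : u = v + (D⁻¹ * A) *ᵥ st := by
    have h1 : (D⁻¹ * A) *ᵥ st = D⁻¹ *ᵥ (W *ᵥ st) + st := by
      rw [hAdef, mul_add, hDinv', Matrix.add_mulVec, one_mulVec, ← mulVec_mulVec]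
    rw [hu, hv, Matrix.mulVec_sub, h1]
    abel
  have pb : b = A *ᵥ v + M *ᵥ st := by
    rw [hb, pu, Matrix.mulVec_add, hMdef, Matrix.add_mulVec, mulVec_mulVec, ← mul_assoc]
    abel
  have pMb : M⁻¹ *ᵥ b = (K⁻¹ * D) *ᵥ v + st := by
    rw [pb, Matrix.mulVec_add, mulVec_mulVec, mulVec_mulVec,
      Matrix.nonsing_inv_mul _ uM, one_mulVec, hMinv,
      mul_assoc (K⁻¹ * D) A⁻¹ A, hAinv', mul_one]
  have hbMb : b ⬝ᵥ M⁻¹ *ᵥ b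
      = v ⬝ᵥ (A * K⁻¹ * D) *ᵥ v + 2*(v ⬝ᵥ A *ᵥ st) + st ⬝ᵥ M *ᵥ st := by
    rw [pMb, pb, add_dotProduct, dotProduct_add, dotProduct_add]
    have t1 : (A *ᵥ v) ⬝ᵥ ((K⁻¹ * D) *ᵥ v) = v ⬝ᵥ (A * K⁻¹ * D) *ᵥ v := by
      rw [dot_shift, hAs, mulVec_mulVec, ← mul_assoc]
    have t2 : (A *ᵥ v) ⬝ᵥ st = v ⬝ᵥ A *ᵥ st := by rw [dot_shift, hAs]
    have t3 : (M *ᵥ st) ⬝ᵥ ((K⁻¹ * D) *ᵥ v) = v ⬝ᵥ A *ᵥ st := by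
      rw [dot_shift, hMs, mulVec_mulVec]
      have h4 : M * (K⁻¹ * D) = A := by
        rw [hMfact]
        calc A * D⁻¹ * K * (K⁻¹ * D) = A * (D⁻¹ * (K * (K⁻¹ * D))) := by
              simp only [mul_assoc]
          _ = A * (D⁻¹ * D) := by rw [← mul_assoc K, hKinv, one_mul]
          _ = A := by rw [hDinv', mul_one]
      rw [h4]
      exact symdot hAs st v
    have t4 : (M *ᵥ st) ⬝ᵥ st = st ⬝ᵥ M *ᵥ st := by rw [dot_shift, hMs]
    rw [t1, t2, t3, t4]; ring
  have hu2 : u ⬝ᵥ D *ᵥ u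
      = v ⬝ᵥ D *ᵥ v + 2*(v ⬝ᵥ A *ᵥ st) + st ⬝ᵥ (A * D⁻¹ * A) *ᵥ st := by
    rw [pu, Matrix.mulVec_add, dotProduct_add, add_dotProduct, add_dotProduct]
    have r1 : v ⬝ᵥ D *ᵥ ((D⁻¹ * A) *ᵥ st) = v ⬝ᵥ A *ᵥ st := by
      rw [mulVec_mulVec, mDP]
    have r2 : ((D⁻¹ * A) *ᵥ st) ⬝ᵥ D *ᵥ v = v ⬝ᵥ A *ᵥ st := by
      rw [dot_shift, mPt, mulVec_mulVec, mPtD]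
      exact symdot hAs st v
    have r3 : ((D⁻¹ * A) *ᵥ st) ⬝ᵥ D *ᵥ ((D⁻¹ * A) *ᵥ st) = st ⬝ᵥ (A * D⁻¹ * A) *ᵥ st := by
      rw [mulVec_mulVec, mDP, dot_shift, mPt, mulVec_mulVec]
    rw [r1, r2, r3]; ring
  have expoeq : c + (1/2) * (b ⬝ᵥ M⁻¹ *ᵥ b) = -(1/2) * (v ⬝ᵥ Sg⁻¹ *ᵥ v) := by
    have hmst : st ⬝ᵥ M *ᵥ st = st ⬝ᵥ (A * D⁻¹ * A) *ᵥ st + st ⬝ᵥ A *ᵥ st := by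
      rw [hMdef, Matrix.add_mulVec, dotProduct_add]
    have hAKD : v ⬝ᵥ (A * K⁻¹ * D) *ᵥ v = v ⬝ᵥ D *ᵥ v - v ⬝ᵥ (D * K⁻¹ * D) *ᵥ v := by
      have hA2 : A = K - D := by rw [hK']; abel
      have h5 : A * K⁻¹ * D = D - D * K⁻¹ * D := by
        rw [hA2, sub_mul, sub_mul, hKinv, one_mul]
      rw [h5, Matrix.sub_mulVec, dotProduct_sub]
    rw [hc, hbMb, hu2, hSinv, hmst, hAKD]
    ring
  have consteq : (Real.sqrt ((2 * Real.pi) ^ d * (D⁻¹).det))⁻¹ *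
      (Real.sqrt ((2 * Real.pi) ^ d * (A⁻¹).det))⁻¹ *
      Real.sqrt ((2*Real.pi)^d / M.det)
        = (Real.sqrt ((2 * Real.pi) ^ d * Sg.det))⁻¹ := by
    have hdetDi : (D⁻¹).det = D.det⁻¹ := by rw [Matrix.det_nonsing_inv, Ring.inverse_eq_inv]
    have hdetAi : (A⁻¹).det = A.det⁻¹ := by rw [Matrix.det_nonsing_inv, Ring.inverse_eq_inv]
    have hdM : M.det = A.det * D.det⁻¹ * K.det := by
      rw [hMfact, Matrix.det_mul, Matrix.det_mul, hdetDi]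
    have hdS : Sg.det = D.det⁻¹ * K.det * D.det⁻¹ := by
      rw [hSfact, Matrix.det_mul, Matrix.det_mul, hdetDi]
    have hdD : (0:ℝ) < D.det := hDpos.det_pos
    have hdA : (0:ℝ) < A.det := hpos.det_pos
    have hdK : (0:ℝ) < K.det := hKpos.det_pos
    have ht : (0:ℝ) < (2 * Real.pi)^d := by positivity
    rw [hdetDi, hdetAi, hdM, hdS]
    rw [← Real.sqrt_inv ((2 * Real.pi)^d * D.det⁻¹),
      ← Real.sqrt_inv ((2 * Real.pi)^d * A.det⁻¹),
      ← Real.sqrt_inv ((2 * Real.pi)^d * (D.det⁻¹ * K.det * D.det⁻¹)),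
      ← Real.sqrt_mul (by positivity), ← Real.sqrt_mul (by positivity)]
    congr 1
    field_simp
  rw [← hv]
  calc (Real.sqrt ((2 * Real.pi) ^ d * (D⁻¹).det))⁻¹ *
      (Real.sqrt ((2 * Real.pi) ^ d * (A⁻¹).det))⁻¹ * Real.exp c *
      (Real.sqrt ((2*Real.pi)^d / M.det) * Real.exp ((1/2) * (b ⬝ᵥ M⁻¹ *ᵥ b)))
      = ((Real.sqrt ((2 * Real.pi) ^ d * (D⁻¹).det))⁻¹ *
        (Real.sqrt ((2 * Real.pi) ^ d * (A⁻¹).det))⁻¹ *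
        Real.sqrt ((2*Real.pi)^d / M.det)) *
        (Real.exp c * Real.exp ((1/2) * (b ⬝ᵥ M⁻¹ *ᵥ b))) := by ring
    _ = (Real.sqrt ((2 * Real.pi) ^ d * Sg.det))⁻¹ *
        Real.exp (-(1/2) * (v ⬝ᵥ Sg⁻¹ *ᵥ v)) := by
        rw [consteq, ← Real.exp_add, expoeq]
    _ = _ := by norm_num
end

section
/- If f(s) = ½sᵀWs + bᵀs with the same W used in preconditioning, then the Vanilla Preconditioned Discrete-HAMS generalized acceptance probability equals 1 for every (s_t, v_{t+1/2}) and every proposal (s*, v*); i.e., the sampler is rejection-free for quadratic potentials. -/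
open Matrix

/-!
With `A = W + D` symmetric, the log of `π(s, s - z)` plus the log-weight of the backward
proposal at `s'` is an expression `E(s, s')` in which `s` and `s'` enter symmetrically.
The normalizers of `Q(s_t)` and `Q(s*)` coincide, so the acceptance ratio is
`exp E(s*, s_t) / exp E(s_t, s*) = 1`.
-/

variable {n : Type*} [Fintype n]

theorem Matrix.IsSymm.dotProduct_mulVec_comm_s13 {R : Type*} [CommSemiring R] {A : Matrix n n R}
    (hA : A.IsSymm) (x y : n → R) : x ⬝ᵥ A *ᵥ y = y ⬝ᵥ A *ᵥ x := by
  rw [dotProduct_mulVec, ← mulVec_transpose, hA, dotProduct_comm]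

theorem log_target_add_log_proposal_eq {W D : Matrix n n ℝ} (hA : (W + D).IsSymm)
    (b z s s' : n → ℝ) :
    (1 / 2) * (s ⬝ᵥ W *ᵥ s) + b ⬝ᵥ s - (1 / 2) * ((s - z) ⬝ᵥ (W + D) *ᵥ (s - z)) +
        (-(1 / 2) * (s' ⬝ᵥ D *ᵥ s') + (b + (W + D) *ᵥ z) ⬝ᵥ s') =
      -(1 / 2) * (s ⬝ᵥ D *ᵥ s) - (1 / 2) * (s' ⬝ᵥ D *ᵥ s') + b ⬝ᵥ (s + s') -
        (1 / 2) * (z ⬝ᵥ (W + D) *ᵥ z) + z ⬝ᵥ (W + D) *ᵥ (s + s') := by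
  have hsz : s ⬝ᵥ (W + D) *ᵥ z = z ⬝ᵥ (W + D) *ᵥ s := hA.dotProduct_mulVec_comm_s13 s z
  have hzs' : (W + D) *ᵥ z ⬝ᵥ s' = z ⬝ᵥ (W + D) *ᵥ s' := by
    rw [dotProduct_comm, hA.dotProduct_mulVec_comm_s13]
  have hss : s ⬝ᵥ (W + D) *ᵥ s = s ⬝ᵥ W *ᵥ s + s ⬝ᵥ D *ᵥ s := by
    rw [add_mulVec, dotProduct_add]
  simp only [mulVec_sub, mulVec_add, sub_dotProduct, dotProduct_sub, add_dotProduct,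
    dotProduct_add, hsz, hzs', hss]
  ring

theorem stmt13_general {d : ℕ} (S : Finset (Fin d → ℝ))
    (W D : Matrix (Fin d) (Fin d) ℝ)
    (hW : W.IsSymm) (hD : D.IsDiag)
    (b zt st sstar : Fin d → ℝ) (hst : st ∈ S)
    (f : (Fin d → ℝ) → ℝ) (hf : ∀ s, f s = (1 / 2) * (s ⬝ᵥ (W *ᵥ s)) + b ⬝ᵥ s)
    (pr : (Fin d → ℝ) → (Fin d → ℝ) → ℝ)
    (hpr : ∀ s v, pr s v = Real.exp (f s - (1 / 2) * (v ⬝ᵥ ((W + D) *ᵥ v))))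
    (Q : (Fin d → ℝ) → ℝ)
    (hQ : ∀ s, Q s =
      Real.exp (-(1 / 2) * (s ⬝ᵥ (D *ᵥ s)) + (b + (W + D) *ᵥ zt) ⬝ᵥ s) /
        ∑ s' ∈ S, Real.exp (-(1 / 2) * (s' ⬝ᵥ (D *ᵥ s')) + (b + (W + D) *ᵥ zt) ⬝ᵥ s')) :
    pr sstar (-(zt - sstar)) * Q st / (pr st (st - zt) * Q sstar) = 1 := by
  have hA : (W + D).IsSymm := hW.add hD.isSymm
  have hZ : ∑ s' ∈ S, Real.exp (-(1 / 2) * (s' ⬝ᵥ (D *ᵥ s')) + (b + (W + D) *ᵥ zt) ⬝ᵥ s') ≠ 0 :=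
    (Finset.sum_pos (fun _ _ => Real.exp_pos _) ⟨st, hst⟩).ne'
  rw [hpr, hpr, hQ, hQ, hf, hf, neg_sub, mul_div_assoc', mul_div_assoc',
    div_div_div_cancel_right₀ hZ, ← Real.exp_add, ← Real.exp_add,
    log_target_add_log_proposal_eq hA, log_target_add_log_proposal_eq hA,
    div_eq_one_iff_eq (Real.exp_pos _).ne']
  congr 1
  rw [add_comm sstar st]
  ring

/-- Vanilla Preconditioned Discrete-HAMS is rejection-free for a quadratic potential
f(s) = ½sᵀWs + bᵀs with the same W used in preconditioning: the generalized acceptance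
ratio equals 1 for every (s_t, v_{t+1/2}) and every proposal (s*, v*), where
v_{t+1/2} = s_t − z_t and v* = z_t − s*. -/
theorem stmt13 {d : ℕ} (S : Finset (Fin d → ℝ))
    (W D : Matrix (Fin d) (Fin d) ℝ)
    (hW : W.IsSymm) (hD : D.IsDiag) (hpos : (W + D).PosDef)
    (b zt st sstar : Fin d → ℝ) (hst : st ∈ S) (hsstar : sstar ∈ S)
    (f : (Fin d → ℝ) → ℝ) (hf : ∀ s, f s = (1 / 2) * (s ⬝ᵥ (W *ᵥ s)) + b ⬝ᵥ s)
    (pr : (Fin d → ℝ) → (Fin d → ℝ) → ℝ)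
    (hpr : ∀ s v, pr s v = Real.exp (f s - (1 / 2) * (v ⬝ᵥ ((W + D) *ᵥ v))))
    (Q : (Fin d → ℝ) → ℝ)
    (hQ : ∀ s, Q s =
      Real.exp (-(1 / 2) * (s ⬝ᵥ (D *ᵥ s)) + (b + (W + D) *ᵥ zt) ⬝ᵥ s) /
        ∑ s' ∈ S, Real.exp (-(1 / 2) * (s' ⬝ᵥ (D *ᵥ s')) + (b + (W + D) *ᵥ zt) ⬝ᵥ s')) :
    pr sstar (-(zt - sstar)) * Q st / (pr st (st - zt) * Q sstar) = 1 :=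
  stmt13_general S W D hW hD b zt st sstar hst f hf pr hpr Q hQ
end

section
/- Under the Vanilla Preconditioned Discrete-HAMS scheme, if a proposal (s*, v*) with v* = v_{t+1/2} + s_t − s* is accepted or rejected (with rejection keeping (s_t, v_{t+1/2})), then s_{t+1} + v_{t+1} = s_t + v_{t+1/2} always holds; consequently, without the auto-regression step, the quantity s_t + v_t is conserved along the chain and v_t is confined to the finite set {c₀ − s : s ∈ S} where c₀ = s₀ + v₀, so the v-chain cannot be ergodic for a Gaussian distribution. -/
/-! Accepting the proposal `(s*, v + s - s*)` and rejecting it both keep `s + v` fixed, so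
`v_t = c₀ - s_t` with `c₀ = s₀ + v₀`; the momentum then ranges over the finite translate
`c₀ - S` of the state space. -/

section

variable {G : Type*} [AddCommGroup G]

lemma add_eq_add_of_accept_or_reject {S : Set G} {s v s' v' : G}
    (h : (∃ sstar ∈ S, s' = sstar ∧ v' = v + s - sstar) ∨ (s' = s ∧ v' = v)) :
    s' + v' = s + v := by
  rcases h with ⟨sstar, -, rfl, rfl⟩ | ⟨rfl, rfl⟩
  · abel
  · rfl

lemma add_eq_add_zero_of_add_succ {s v : ℕ → G}
    (h : ∀ t, s (t + 1) + v (t + 1) = s t + v t) (t : ℕ) :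
    s t + v t = s 0 + v 0 := by
  induction t with
  | zero => rfl
  | succ t ih => rw [h t, ih]

lemma exists_mem_eq_sub_of_add_eq {S : Set G} {s v : ℕ → G} {c : G}
    (hmem : ∀ t, s t ∈ S) (hc : ∀ t, s t + v t = c) (t : ℕ) :
    ∃ x ∈ S, v t = c - x :=
  ⟨s t, hmem t, by rw [← hc t, add_sub_cancel_left]⟩

lemma finite_range_of_add_eq {S : Set G} {s v : ℕ → G} {c : G} (hS : S.Finite)
    (hmem : ∀ t, s t ∈ S) (hc : ∀ t, s t + v t = c) :
    (Set.range v).Finite := by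
  refine (hS.image (c - ·)).subset ?_
  rintro _ ⟨t, rfl⟩
  obtain ⟨x, hx, hvx⟩ := exists_mem_eq_sub_of_add_eq hmem hc t
  exact ⟨x, hx, hvx.symm⟩

end

/-- Degeneracy of the auxiliary scheme without auto-regression: since every accepted
proposal satisfies s* + v* = s_t + v_t and rejection keeps (s_t, v_t), the quantity
s_t + v_t is conserved, v_t is confined to {c₀ − s : s ∈ S} with c₀ = s₀ + v₀, and the
range of the momentum chain is finite (hence not ergodic for a Gaussian distribution). -/
theorem stmt16 {d : ℕ} (S : Finset (Fin d → ℝ))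
    (sseq vseq : ℕ → Fin d → ℝ)
    (hmem : ∀ t, sseq t ∈ S)
    (hstep : ∀ t,
      (∃ sstar ∈ S, sseq (t + 1) = sstar ∧ vseq (t + 1) = vseq t + sseq t - sstar) ∨
      (sseq (t + 1) = sseq t ∧ vseq (t + 1) = vseq t)) :
    (∀ t, sseq t + vseq t = sseq 0 + vseq 0) ∧
    (∀ t, ∃ s ∈ S, vseq t = (sseq 0 + vseq 0) - s) ∧
    (Set.range vseq).Finite := by
  have hcons : ∀ t, sseq t + vseq t = sseq 0 + vseq 0 :=
    add_eq_add_zero_of_add_succ fun t => add_eq_add_of_accept_or_reject (hstep t)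
  exact ⟨hcons, exists_mem_eq_sub_of_add_eq hmem hcons,
    finite_range_of_add_eq S.finite_toSet hmem hcons⟩
end
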